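/- Let Â_1, …, Â_K and A_1, …, A_K be matrices with Â_j, A_j of size p_j × r_j, and let H_1, …, H_K be r_j × r_j matrices with ‖H_j‖_F ≤ C and ‖A_j‖_F² ≤ C p_j and ‖Â_j‖_F² ≤ C p_j for all j and some constant C ≥ 1. Fix k and define B̂ = ⊗_{j ≠ k} Â_j (Kronecker product over all j ≠ k in decreasing order of index), B = ⊗_{j ≠ k} A_j, H_{−k} = ⊗_{j ≠ k} H_j, and p_{−k} = Π_{j ≠ k} p_j. Then there is a constant C' depending only on K and C such that (1/p_{−k}) ‖B̂ − B H_{−k}‖_F² ≤ C' Σ_{j ≠ k} (1/p_j) ‖Â_j − A_j H_j‖_F². -/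

import Mathlib

open Matrix BigOperators

/-- Squared Frobenius norm. -/
noncomputable def frob2 {m n : Type*} [Fintype m] [Fintype n] (M : Matrix m n ℝ) : ℝ :=
  ∑ i, ∑ j, (M i j) ^ 2

/-- Frobenius norm. -/
noncomputable def frobNorm {m n : Type*} [Fintype m] [Fintype n] (M : Matrix m n ℝ) : ℝ :=
  Real.sqrt (frob2 M)

/-- Kronecker product of a finite family of matrices (entries are products of entries). -/
def kronFamily {m : ℕ} {p r : Fin m → ℕ}
    (A : ∀ j, Matrix (Fin (p j)) (Fin (r j)) ℝ) :
    Matrix (∀ j, Fin (p j)) (∀ j, Fin (r j)) ℝ :=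
  Matrix.of fun i c => ∏ j, A j (i j) (c j)


/-! Entrywise, `∏ X_ℓ - ∏ Y_ℓ = ∑_j (∏_{ℓ<j} Y_ℓ) (X_j - Y_j) (∏_{ℓ>j} X_ℓ)`, so the difference of
two Kronecker products is a sum of `m` Kronecker products. The squared Frobenius norm is
multiplicative on Kronecker products, hence the `j`-th term is bounded by `‖X_j - Y_j‖²` times
`∏_{ℓ≠j} K p_ℓ`, and Cauchy–Schwarz over the `m` terms costs a factor `m`. For `X = Â` and
`Y_ℓ = A_ℓ H_ℓ` one may take `K = C³`, since `‖A_ℓ H_ℓ‖² ≤ ‖A_ℓ‖² ‖H_ℓ‖²`. -/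

open Finset

section Frobenius

variable {a b c : Type*} [Fintype a] [Fintype b] [Fintype c]

lemma frob2_nonneg (M : Matrix a b ℝ) : 0 ≤ frob2 M :=
  sum_nonneg fun _ _ => sum_nonneg fun _ _ => sq_nonneg _

lemma frob2_le_sq_of_frobNorm_le {M : Matrix a b ℝ} {C : ℝ} (h : frobNorm M ≤ C) :
    frob2 M ≤ C ^ 2 :=
  (Real.sqrt_le_iff.mp h).2

lemma frob2_mul_le (M : Matrix a b ℝ) (N : Matrix b c ℝ) : frob2 (M * N) ≤ frob2 M * frob2 N :=
  calc frob2 (M * N) ≤ ∑ i, ∑ k, (∑ j, M i j ^ 2) * ∑ j, N j k ^ 2 :=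
        sum_le_sum fun i _ => sum_le_sum fun k _ => sum_mul_sq_le_sq_mul_sq _ _ _
    _ = frob2 M * frob2 N := by
        simp only [frob2, ← mul_sum, ← sum_mul]
        congr 1
        exact sum_comm

lemma frob2_sum_le {ι : Type*} (s : Finset ι) (M : ι → Matrix a b ℝ) :
    frob2 (∑ i ∈ s, M i) ≤ #s * ∑ i ∈ s, frob2 (M i) :=
  calc frob2 (∑ i ∈ s, M i) ≤ ∑ x, ∑ y, #s * ∑ i ∈ s, M i x y ^ 2 :=
        sum_le_sum fun x _ => sum_le_sum fun y _ => by
          rw [Matrix.sum_apply]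
          exact sq_sum_le_card_mul_sum_sq
    _ = #s * ∑ i ∈ s, frob2 (M i) := by
        simp only [frob2, ← mul_sum]
        rw [sum_comm_cycle]

end Frobenius

theorem Finset.prod_sub_prod_eq_sum_ordered {ι R : Type*} [CommRing R] [LinearOrder ι]
    (s : Finset ι) (x y : ι → R) :
    ∏ i ∈ s, x i - ∏ i ∈ s, y i =
      ∑ i ∈ s, ∏ j ∈ s, if j < i then y j else if j = i then x j - y j else x j := by
  have term : ∀ i ∈ s, (∏ j ∈ s, if j < i then y j else if j = i then x j - y j else x j) =
      (x i - y i) * (∏ j ∈ s with j < i, y j) * ∏ j ∈ s with i < j, x j := by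
    intro i hi
    rw [prod_ite, prod_ite, filter_filter, filter_filter]
    have h1 : {j ∈ s | ¬j < i ∧ j = i} = {i} := by ext j; simp only [mem_filter]; grind
    have h2 : {j ∈ s | ¬j < i ∧ ¬j = i} = {j ∈ s | i < j} := by ext j; simp only [mem_filter]; grind
    rw [h1, h2, prod_singleton]; ring
  have h := prod_sub_ordered s x (fun i => x i - y i)
  simp only [sub_sub_cancel] at h
  rw [h, sub_sub_cancel, sum_congr rfl term]

-- Not an equality: when some `q j` with `j ≠ i` vanishes, the left side is `0` (as `1 / 0 = 0`).
lemma one_div_prod_mul_prod_erase_le {ι 𝕜 : Type*} [Field 𝕜] [LinearOrder 𝕜]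
    [IsStrictOrderedRing 𝕜] [DecidableEq ι] {s : Finset ι} {i : ι} (hi : i ∈ s) {q : ι → 𝕜}
    (hq : ∀ j ∈ s, 0 ≤ q j) :
    (1 / ∏ j ∈ s, q j) * ∏ j ∈ s.erase i, q j ≤ 1 / q i := by
  rw [← mul_prod_erase s q hi, one_div, one_div, mul_inv, mul_assoc]
  exact mul_le_of_le_one_right (inv_nonneg.mpr (hq i hi)) inv_mul_le_one

section Kronecker

variable {m : ℕ} {p r : Fin m → ℕ}

lemma frob2_kronFamily (A : ∀ j, Matrix (Fin (p j)) (Fin (r j)) ℝ) :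
    frob2 (kronFamily A) = ∏ j, frob2 (A j) := by
  simp only [frob2, kronFamily, Matrix.of_apply, Fintype.prod_sum, ← prod_pow]

lemma kronFamily_mul (A : ∀ j, Matrix (Fin (p j)) (Fin (r j)) ℝ)
    (H : ∀ j, Matrix (Fin (r j)) (Fin (r j)) ℝ) :
    kronFamily A * kronFamily H = kronFamily fun j => A j * H j := by
  ext i c
  simp only [kronFamily, Matrix.mul_apply, Matrix.of_apply, Fintype.prod_sum, ← prod_mul_distrib]

def telescopeFamily (X Y : ∀ j, Matrix (Fin (p j)) (Fin (r j)) ℝ) (j : Fin m) :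
    ∀ ℓ, Matrix (Fin (p ℓ)) (Fin (r ℓ)) ℝ :=
  fun ℓ => if ℓ < j then Y ℓ else if ℓ = j then X ℓ - Y ℓ else X ℓ

lemma kronFamily_sub_kronFamily (X Y : ∀ j, Matrix (Fin (p j)) (Fin (r j)) ℝ) :
    kronFamily X - kronFamily Y = ∑ j, kronFamily (telescopeFamily X Y j) := by
  ext i c
  simp only [kronFamily, telescopeFamily, Matrix.sub_apply, Matrix.sum_apply, Matrix.of_apply]
  rw [prod_sub_prod_eq_sum_ordered]
  refine sum_congr rfl fun j _ => prod_congr rfl fun ℓ _ => ?_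
  split_ifs <;> rfl

lemma frob2_kronFamily_telescopeFamily_le {K : ℝ} {X Y : ∀ j, Matrix (Fin (p j)) (Fin (r j)) ℝ}
    (hX : ∀ ℓ, frob2 (X ℓ) ≤ K * p ℓ) (hY : ∀ ℓ, frob2 (Y ℓ) ≤ K * p ℓ) (j : Fin m) :
    frob2 (kronFamily (telescopeFamily X Y j)) ≤
      frob2 (X j - Y j) * ∏ ℓ ∈ univ.erase j, (K * p ℓ) := by
  rw [frob2_kronFamily, ← mul_prod_erase _ _ (mem_univ j)]
  simp only [telescopeFamily, lt_irrefl, if_false, if_true]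
  refine mul_le_mul_of_nonneg_left
    (prod_le_prod (fun ℓ _ => frob2_nonneg _) fun ℓ hℓ => ?_) (frob2_nonneg _)
  rw [if_neg (ne_of_mem_erase hℓ)]
  split_ifs
  exacts [hY ℓ, hX ℓ]

lemma frob2_kronFamily_sub_le {K : ℝ} (hK : 0 ≤ K) {X Y : ∀ j, Matrix (Fin (p j)) (Fin (r j)) ℝ}
    (hX : ∀ ℓ, frob2 (X ℓ) ≤ K * p ℓ) (hY : ∀ ℓ, frob2 (Y ℓ) ≤ K * p ℓ) :
    (1 / ∏ j, (p j : ℝ)) * frob2 (kronFamily X - kronFamily Y) ≤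
      m * K ^ (m - 1) * ∑ j, (1 / (p j : ℝ)) * frob2 (X j - Y j) :=
  calc (1 / ∏ j, (p j : ℝ)) * frob2 (kronFamily X - kronFamily Y)
      ≤ (1 / ∏ j, (p j : ℝ)) * (m * ∑ j, frob2 (X j - Y j) * ∏ ℓ ∈ univ.erase j, (K * p ℓ)) := by
        rw [kronFamily_sub_kronFamily]
        gcongr
        calc _ ≤ #(univ : Finset (Fin m)) * ∑ j, frob2 (kronFamily (telescopeFamily X Y j)) :=
              frob2_sum_le _ _
          _ ≤ _ := by
              rw [card_univ, Fintype.card_fin]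
              gcongr with j
              exact frob2_kronFamily_telescopeFamily_le hX hY j
    _ = m * K ^ (m - 1) * ∑ j,
          ((1 / ∏ j, (p j : ℝ)) * ∏ ℓ ∈ univ.erase j, (p ℓ : ℝ)) * frob2 (X j - Y j) := by
        simp only [prod_mul_distrib, prod_const, card_erase_of_mem (mem_univ _), card_univ,
          Fintype.card_fin, mul_sum]
        exact sum_congr rfl fun j _ => by ring
    _ ≤ m * K ^ (m - 1) * ∑ j, (1 / (p j : ℝ)) * frob2 (X j - Y j) := by
        gcongr with j
        · exact frob2_nonneg _
        · exact one_div_prod_mul_prod_erase_le (mem_univ j) fun ℓ _ => Nat.cast_nonneg _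

end Kronecker

theorem stmt14 (m : ℕ) (C : ℝ) (hC : 1 ≤ C) :
    ∃ C' : ℝ, 0 < C' ∧
      ∀ (p r : Fin m → ℕ)
        (A Ahat : ∀ j, Matrix (Fin (p j)) (Fin (r j)) ℝ)
        (H : ∀ j, Matrix (Fin (r j)) (Fin (r j)) ℝ),
        (∀ j, frobNorm (H j) ≤ C) →
        (∀ j, frob2 (A j) ≤ C * (p j : ℝ)) →
        (∀ j, frob2 (Ahat j) ≤ C * (p j : ℝ)) →
        (1 / ∏ j, (p j : ℝ)) *
            frob2 (kronFamily Ahat - kronFamily A * kronFamily H)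
          ≤ C' * ∑ j, (1 / (p j : ℝ)) * frob2 (Ahat j - A j * H j) := by
  have hC0 : 0 < C := one_pos.trans_le hC
  refine ⟨(m + 1) * (C ^ 3) ^ (m - 1), by positivity, fun p r A Ahat H hH hA hAhat => ?_⟩
  have hAH : ∀ j, frob2 (A j * H j) ≤ C ^ 3 * p j := fun j =>
    calc frob2 (A j * H j) ≤ C * p j * C ^ 2 :=
          (frob2_mul_le _ _).trans (mul_le_mul (hA j) (frob2_le_sq_of_frobNorm_le (hH j))
            (frob2_nonneg _) (by positivity))
      _ = C ^ 3 * p j := by ring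
  have hAhat' : ∀ j, frob2 (Ahat j) ≤ C ^ 3 * p j := fun j =>
    (hAhat j).trans (mul_le_mul_of_nonneg_right (le_self_pow₀ hC (by norm_num)) (by positivity))
  rw [kronFamily_mul]
  refine (frob2_kronFamily_sub_le (by positivity) hAhat' hAH).trans ?_
  gcongr
  · exact sum_nonneg fun j _ => mul_nonneg (by positivity) (frob2_nonneg _)
  · linarith
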